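/- Let P = e_1…e_k be a path with k ≥ 2 arcs, all of whose arc gains lie in [−B, B]. Then P is a funnel if and only if both of the following hold: (1) every arc gain is nonzero and the signs alternate, i.e., sign(g(e_i)) = (−1)^{i+1}·sign(g(e_1)) for every 1 ≤ i ≤ k; and (2) either P is first-arc-bounded and |g(e_1)| ≥ |g(e_2)| > |g(e_3)| > … > |g(e_k)| > 0, or P is last-arc-bounded and |g(e_k)| ≥ |g(e_{k−1})| > … > |g(e_1)| > 0 (only the first inequality in each chain is weak). -/

import Mathlib

/-!
Arc-boundedness confines all vertex gains to an interval of width `|g 0|` or `|g (n - 1)|`,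
hence at most `B`, so every subpath is traversable from a full battery, and a subpath is
monotone exactly when its vertex gains lie between those of its two ends. For two arcs this
says the gains do not have strictly opposite signs; for three arcs of alternating signs it says
the middle gain is the smallest in absolute value. A funnel is therefore an arc-bounded path
with alternating signs along which `|g|` has no interior weak local minimum. Such a sequence,
once it fails to increase, decreases strictly to the end; arc-boundedness supplies the anchor
`|g 1| ≤ |g 0|` or `|g (n - 2)| ≤ |g (n - 1)|` that forces one of the two chains.
-/

open Finset

namespace EV

noncomputable section

/-- Charge after traversing `i` arcs of a path with arc gains `g`, battery capacity `B`,
initial charge `b`. -/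
def charge (B b : ℝ) (g : ℕ → ℝ) : ℕ → ℝ
  | 0 => b
  | i + 1 => min (charge B b g i + g i) B

/-- The traversal of the path with `n` arcs is feasible from initial charge `b`. -/
def Feasible (B b : ℝ) (g : ℕ → ℝ) (n : ℕ) : Prop :=
  ∀ i < n, 0 ≤ charge B b g i + g i

open Classical in
/-- Maximum final charge `α_b(P)` for a path `P` with `n` arc gains `g`,
as an extended real (`⊥ = -∞` if the traversal is infeasible). -/
def alpha (B b : ℝ) (g : ℕ → ℝ) (n : ℕ) : EReal :=
  if Feasible B b g n then ((charge B b g n : ℝ) : EReal) else ⊥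

/-- Gain of the `i`-th vertex (0-indexed): the sum of the first `i` arc gains. -/
def vGain (g : ℕ → ℝ) (i : ℕ) : ℝ := ∑ t ∈ Finset.range i, g t

/-- `P` is traversable: `α_B(P) ≥ 0`, i.e. feasible from a full battery. -/
def Traversable (B : ℝ) (g : ℕ → ℝ) (n : ℕ) : Prop := Feasible B B g n

/-- `C` is a charge drop schedule for a path with `n` arcs (vertices `0,…,n`):
no drop at the first vertex, all drops nonnegative. -/
def Schedule (C : ℕ → ℝ) (n : ℕ) : Prop := C 0 = 0 ∧ ∀ i ≤ n, 0 ≤ C i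

/-- Gain of vertex `i` with respect to the charge drop schedule `C`. -/
def cGain (g C : ℕ → ℝ) (i : ℕ) : ℝ := vGain g i - ∑ t ∈ Finset.range (i + 1), C t

/-- `P` (with `n` arcs) is ascending with respect to the schedule `C`. -/
def AscendingC (B : ℝ) (g C : ℕ → ℝ) (n : ℕ) : Prop :=
  Traversable B g n ∧ ∀ i ≤ n, 0 ≤ cGain g C i ∧ cGain g C i ≤ cGain g C n

/-- `P` (with `n` arcs) is descending with respect to the schedule `C`. -/
def DescendingC (B : ℝ) (g C : ℕ → ℝ) (n : ℕ) : Prop :=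
  Traversable B g n ∧ ∀ i ≤ n, cGain g C n ≤ cGain g C i ∧ cGain g C i ≤ 0

/-- `P` is monotone with respect to the schedule `C`. -/
def MonotoneC (B : ℝ) (g C : ℕ → ℝ) (n : ℕ) : Prop :=
  AscendingC B g C n ∨ DescendingC B g C n

/-- Ascending with respect to the zero schedule. -/
def Ascending (B : ℝ) (g : ℕ → ℝ) (n : ℕ) : Prop := AscendingC B g (fun _ => 0) n

/-- Descending with respect to the zero schedule. -/
def Descending (B : ℝ) (g : ℕ → ℝ) (n : ℕ) : Prop := DescendingC B g (fun _ => 0) n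

/-- Monotone with respect to the zero schedule. -/
def MonotonePath (B : ℝ) (g : ℕ → ℝ) (n : ℕ) : Prop := Ascending B g n ∨ Descending B g n

/-- The contiguous subpath whose arcs start at arc index `a`. -/
def SubPath (g : ℕ → ℝ) (a : ℕ) : ℕ → ℝ := fun t => g (a + t)

/-- Restriction of a charge drop schedule to the subpath starting at vertex `a`:
no drop at the subpath's first vertex. -/
def restrict (C : ℕ → ℝ) (a : ℕ) : ℕ → ℝ := fun t => if t = 0 then 0 else C (a + t)

/-- First-arc-bounded with respect to a schedule `C` (no drop at the second vertex,
and all vertex gains lie between the gains of the first two vertices). -/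
def FirstArcBoundedC (g C : ℕ → ℝ) (n : ℕ) : Prop :=
  C 1 = 0 ∧
    ((0 ≤ g 0 ∧ ∀ i ≤ n, 0 ≤ cGain g C i ∧ cGain g C i ≤ g 0) ∨
     (g 0 ≤ 0 ∧ ∀ i ≤ n, g 0 ≤ cGain g C i ∧ cGain g C i ≤ 0))

/-- Last-arc-bounded with respect to a schedule `C` (no drops at the last two vertices,
and all vertex gains lie between the gains of the last two vertices). -/
def LastArcBoundedC (g C : ℕ → ℝ) (n : ℕ) : Prop :=
  C (n - 1) = 0 ∧ C n = 0 ∧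
    ((0 ≤ g (n - 1) ∧ ∀ i ≤ n, cGain g C (n - 1) ≤ cGain g C i ∧ cGain g C i ≤ cGain g C n) ∨
     (g (n - 1) < 0 ∧ ∀ i ≤ n, cGain g C n ≤ cGain g C i ∧ cGain g C i ≤ cGain g C (n - 1)))

/-- First-arc-bounded (zero schedule). -/
def FirstArcBounded (g : ℕ → ℝ) (n : ℕ) : Prop := FirstArcBoundedC g (fun _ => 0) n

/-- Last-arc-bounded (zero schedule). -/
def LastArcBounded (g : ℕ → ℝ) (n : ℕ) : Prop := LastArcBoundedC g (fun _ => 0) n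

/-- Arc-bounded: first- or last-arc-bounded. -/
def ArcBounded (g : ℕ → ℝ) (n : ℕ) : Prop := FirstArcBounded g n ∨ LastArcBounded g n

/-- A funnel: arc-bounded and containing no monotone subpath of 2 or 3 consecutive arcs. -/
def Funnel (B : ℝ) (g : ℕ → ℝ) (n : ℕ) : Prop :=
  ArcBounded g n ∧ ∀ a m, (m = 2 ∨ m = 3) → a + m ≤ n → ¬ MonotonePath B (SubPath g a) m

/-- `j = s̄(i)`: the maximal index `j ≥ i` (among arcs of a path with `n` arcs) such that
the subpath of arcs `i,…,j` is first-arc-bounded. -/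
def IsSbar (g : ℕ → ℝ) (n i j : ℕ) : Prop :=
  i ≤ j ∧ j < n ∧ FirstArcBounded (SubPath g i) (j - i + 1) ∧
    ∀ j', i ≤ j' → j' < n → FirstArcBounded (SubPath g i) (j' - i + 1) → j' ≤ j

/-- `j = s̲(i)`: the minimal index `j ≤ i` such that the subpath of arcs `j,…,i`
is last-arc-bounded. -/
def IsSlow (g : ℕ → ℝ) (n i j : ℕ) : Prop :=
  j ≤ i ∧ i < n ∧ LastArcBounded (SubPath g j) (i - j + 1) ∧
    ∀ j', j' ≤ i → LastArcBounded (SubPath g j') (i - j' + 1) → j ≤ j'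

/-- Arc gains of the walk around a cycle with `m` arc gains `g`, starting at vertex `a`. -/
def cyc (g : ℕ → ℝ) (m a : ℕ) : ℕ → ℝ := fun t => g ((a + t) % m)

/-- A walk of length `ℓ` from `x` to `y` in the directed graph with arc relation `A`. -/
def IsWalk {V : Type*} (A : V → V → Prop) (w : ℕ → V) (ℓ : ℕ) (x y : V) : Prop :=
  w 0 = x ∧ w ℓ = y ∧ ∀ t < ℓ, A (w t) (w (t + 1))

/-- The sequence of arc gains induced by a walk `w` in a graph with gain function `g`. -/
def walkGains {V : Type*} (g : V → V → ℝ) (w : ℕ → V) : ℕ → ℝ :=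
  fun t => g (w t) (w (t + 1))

lemma vGain_zero (g : ℕ → ℝ) : vGain g 0 = 0 := Finset.sum_range_zero g

lemma vGain_succ (g : ℕ → ℝ) (i : ℕ) : vGain g (i + 1) = vGain g i + g i :=
  Finset.sum_range_succ g i

lemma vGain_subPath (g : ℕ → ℝ) (a t : ℕ) :
    vGain (SubPath g a) t = vGain g (a + t) - vGain g a := by
  induction t with
  | zero => simp [vGain_zero]
  | succ t ih => rw [vGain_succ, ih, ← add_assoc, vGain_succ, SubPath]; ring

lemma cGain_zero (g : ℕ → ℝ) : cGain g (fun _ => 0) = vGain g := by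
  funext i; simp [cGain]

section Charge

variable (B : ℝ) (g : ℕ → ℝ)

lemma charge_le (i j : ℕ) (hji : j ≤ i) : charge B B g i ≤ B + (vGain g i - vGain g j) := by
  induction i with
  | zero => obtain rfl := Nat.le_zero.1 hji; simp [charge]
  | succ i ih =>
    rcases Nat.of_le_succ hji with hji | rfl
    · calc charge B B g (i + 1) ≤ charge B B g i + g i := min_le_left _ _
        _ ≤ B + (vGain g i - vGain g j) + g i := by gcongr; exact ih hji
        _ = B + (vGain g (i + 1) - vGain g j) := by rw [vGain_succ]; ring
    · rw [sub_self, add_zero]; exact min_le_right _ _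

-- `j` is the last vertex at which the battery was full.
lemma exists_charge_eq (i : ℕ) : ∃ j ≤ i, charge B B g i = B + (vGain g i - vGain g j) := by
  induction i with
  | zero => exact ⟨0, le_rfl, by simp [charge]⟩
  | succ i ih =>
    obtain ⟨j, hji, hj⟩ := ih
    rcases min_choice (charge B B g i + g i) B with h | h
    · exact ⟨j, hji.trans i.le_succ, by rw [charge, h, hj, vGain_succ]; ring⟩
    · exact ⟨i + 1, le_rfl, by rw [charge, h]; ring⟩

theorem traversable_iff (n : ℕ) :
    Traversable B g n ↔ ∀ i ≤ n, ∀ j < i, vGain g j - vGain g i ≤ B := by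
  constructor
  · rintro h (_ | i) hi j hji
    · exact absurd hji (Nat.not_lt_zero j)
    · have hfeas := h i hi
      have hle := charge_le B g i j (Nat.lt_succ_iff.1 hji)
      rw [vGain_succ]; linarith
  · intro h i hi
    obtain ⟨j, hji, hj⟩ := exists_charge_eq B g i
    have hwin := h (i + 1) hi j (Nat.lt_succ_of_le hji)
    rw [vGain_succ] at hwin; rw [hj]; linarith

end Charge

def EndpointBounded (h : ℕ → ℝ) (m : ℕ) : Prop :=
  (∀ i ≤ m, 0 ≤ vGain h i ∧ vGain h i ≤ vGain h m) ∨
    (∀ i ≤ m, vGain h m ≤ vGain h i ∧ vGain h i ≤ 0)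

lemma monotonePath_iff (B : ℝ) (h : ℕ → ℝ) (m : ℕ) :
    MonotonePath B h m ↔ Traversable B h m ∧ EndpointBounded h m := by
  simp only [MonotonePath, Ascending, Descending, AscendingC, DescendingC, cGain_zero,
    EndpointBounded, and_or_left]

lemma endpointBounded_two_iff (h : ℕ → ℝ) : EndpointBounded h 2 ↔ 0 ≤ h 0 * h 1 := by
  simp only [EndpointBounded, Nat.le_succ_iff_eq_or_le, Nat.le_zero, forall_eq_or_imp,
    forall_eq, vGain_succ, vGain_zero, mul_nonneg_iff]
  grind

lemma endpointBounded_three_iff (h : ℕ → ℝ) (h01 : h 0 * h 1 < 0) (h12 : h 1 * h 2 < 0) :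
    EndpointBounded h 3 ↔ |h 1| ≤ |h 0| ∧ |h 1| ≤ |h 2| := by
  simp only [EndpointBounded, Nat.le_succ_iff_eq_or_le, Nat.le_zero, forall_eq_or_imp,
    forall_eq, vGain_succ, vGain_zero]
  rcases mul_neg_iff.1 h01 with ⟨p0, n1⟩ | ⟨n0, p1⟩
  · have p2 : 0 < h 2 := by nlinarith
    rw [abs_of_pos p0, abs_of_neg n1, abs_of_pos p2]
    grind
  · have n2 : h 2 < 0 := by nlinarith
    rw [abs_of_neg n0, abs_of_pos p1, abs_of_neg n2]
    grind

lemma firstArcBounded_iff (g : ℕ → ℝ) (n : ℕ) :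
    FirstArcBounded g n ↔
      (0 ≤ g 0 ∧ ∀ i ≤ n, 0 ≤ vGain g i ∧ vGain g i ≤ g 0) ∨
        (g 0 ≤ 0 ∧ ∀ i ≤ n, g 0 ≤ vGain g i ∧ vGain g i ≤ 0) := by
  simp [FirstArcBounded, FirstArcBoundedC, cGain_zero]

lemma lastArcBounded_iff (g : ℕ → ℝ) (n : ℕ) :
    LastArcBounded g n ↔
      (0 ≤ g (n - 1) ∧ ∀ i ≤ n, vGain g (n - 1) ≤ vGain g i ∧ vGain g i ≤ vGain g n) ∨
        (g (n - 1) < 0 ∧ ∀ i ≤ n, vGain g n ≤ vGain g i ∧ vGain g i ≤ vGain g (n - 1)) := by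
  simp [LastArcBounded, LastArcBoundedC, cGain_zero]

namespace FirstArcBounded

variable {g : ℕ → ℝ} {n : ℕ}

lemma vGain_sub_le (hg : FirstArcBounded g n) {i j : ℕ} (hi : i ≤ n) (hj : j ≤ n) :
    vGain g j - vGain g i ≤ |g 0| := by
  rcases (firstArcBounded_iff g n).1 hg with ⟨h0, hb⟩ | ⟨h0, hb⟩
  · rw [abs_of_nonneg h0]; linarith [hb i hi, hb j hj]
  · rw [abs_of_nonpos h0]; linarith [hb i hi, hb j hj]

lemma abs_one_le (hg : FirstArcBounded g n) (hn : 2 ≤ n) : |g 1| ≤ |g 0| := by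
  have v2 : vGain g 2 = g 0 + g 1 := by simp [vGain_succ, vGain_zero]
  rcases (firstArcBounded_iff g n).1 hg with ⟨h0, hb⟩ | ⟨h0, hb⟩ <;>
  · have := hb 2 hn
    rw [v2] at this
    rw [abs_le]
    constructor <;> cases abs_cases (g 0) <;> linarith

end FirstArcBounded

namespace LastArcBounded

variable {g : ℕ → ℝ} {n : ℕ}

lemma vGain_sub_le (hg : LastArcBounded g n) (hn : 1 ≤ n) {i j : ℕ} (hi : i ≤ n) (hj : j ≤ n) :
    vGain g j - vGain g i ≤ |g (n - 1)| := by
  have vn : vGain g n = vGain g (n - 1) + g (n - 1) := by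
    rw [← vGain_succ, Nat.sub_add_cancel hn]
  rcases (lastArcBounded_iff g n).1 hg with ⟨h0, hb⟩ | ⟨h0, hb⟩
  · rw [abs_of_nonneg h0]; linarith [hb i hi, hb j hj]
  · rw [abs_of_neg h0]; linarith [hb i hi, hb j hj]

lemma abs_le_abs_last (hg : LastArcBounded g n) (hn : 2 ≤ n) : |g (n - 2)| ≤ |g (n - 1)| := by
  obtain ⟨k, rfl⟩ : ∃ k, n = k + 2 := ⟨n - 2, by omega⟩
  have hk : k + 2 - 1 = k + 1 := rfl
  rw [lastArcBounded_iff, hk] at hg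
  rw [hk, Nat.add_sub_cancel]
  rcases hg with ⟨h0, hb⟩ | ⟨h0, hb⟩ <;>
  · have := hb k (by omega)
    simp only [vGain_succ] at this
    rw [abs_le]
    constructor <;> cases abs_cases (g (k + 1)) <;> linarith

end LastArcBounded

lemma ArcBounded.traversable_subPath {B : ℝ} {g : ℕ → ℝ} {n : ℕ} (hg : ArcBounded g n)
    (hB : ∀ i < n, |g i| ≤ B) {a m : ℕ} (ham : a + m ≤ n) : Traversable B (SubPath g a) m := by
  rw [traversable_iff]
  intro i hi j hji
  rw [vGain_subPath, vGain_subPath, sub_sub_sub_cancel_right]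
  rcases hg with hg | hg
  · exact (hg.vGain_sub_le (by omega) (by omega)).trans (hB 0 (by omega))
  · exact (hg.vGain_sub_le (by omega) (by omega) (by omega)).trans (hB (n - 1) (by omega))

def Alternating (g : ℕ → ℝ) (n : ℕ) : Prop := ∀ i, i + 1 < n → g i * g (i + 1) < 0

lemma mul_neg_iff_sign_eq_neg {x y : ℝ} (hx : x ≠ 0) (hy : y ≠ 0) :
    x * y < 0 ↔ Real.sign y = -Real.sign x := by
  rcases hx.lt_or_gt with hx | hx <;> rcases hy.lt_or_gt with hy | hy <;>
    simp [Real.sign_of_neg, Real.sign_of_pos, mul_neg_iff, hx, hy, hx.not_gt, hy.not_gt] <;>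
    norm_num

lemma forall_eq_neg_iff_eq_neg_one_pow_mul {s : ℕ → ℝ} {n : ℕ} :
    (∀ i, i + 1 < n → s (i + 1) = -s i) ↔ ∀ i < n, s i = (-1) ^ i * s 0 := by
  constructor
  · intro h i hi
    induction i with
    | zero => simp
    | succ i ih => rw [h i hi, ih (by omega), pow_succ]; ring
  · intro h i hi
    rw [h _ hi, h i (by omega), pow_succ]; ring

lemma Alternating.ne_zero {g : ℕ → ℝ} {n : ℕ} (hg : Alternating g n) (hn : 2 ≤ n) :
    ∀ i < n, g i ≠ 0 := by
  intro i hi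
  rcases Nat.lt_or_ge (i + 1) n with h | h
  · exact left_ne_zero_of_mul (hg i h).ne
  · obtain ⟨j, rfl⟩ : ∃ j, i = j + 1 := ⟨i - 1, by omega⟩
    exact right_ne_zero_of_mul (hg j (by omega)).ne

lemma alternating_iff_sign {g : ℕ → ℝ} {n : ℕ} (hn : 2 ≤ n) :
    Alternating g n ↔ ∀ i < n, g i ≠ 0 ∧ Real.sign (g i) = (-1) ^ i * Real.sign (g 0) := by
  constructor
  · intro hg
    have hne := hg.ne_zero hn
    have hsign := forall_eq_neg_iff_eq_neg_one_pow_mul (s := fun i => Real.sign (g i)).1 fun i hi =>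
      (mul_neg_iff_sign_eq_neg (hne i (by omega)) (hne (i + 1) hi)).1 (hg i hi)
    exact fun i hi => ⟨hne i hi, hsign i hi⟩
  · intro h i hi
    have hsign := forall_eq_neg_iff_eq_neg_one_pow_mul (s := fun i => Real.sign (g i)).2
      fun i hi => (h i hi).2
    exact (mul_neg_iff_sign_eq_neg (h i (by omega)).1 (h (i + 1) hi).1).2 (hsign i hi)

def NoInteriorWeakMin (u : ℕ → ℝ) (n : ℕ) : Prop :=
  ∀ a, a + 2 < n → u (a + 1) ≤ u a → u (a + 2) < u (a + 1)

namespace NoInteriorWeakMin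

variable {u : ℕ → ℝ} {n : ℕ}

lemma succ_lt_of_le {a : ℕ} (hu : NoInteriorWeakMin u n) (ha : u (a + 1) ≤ u a) :
    ∀ i, a + 1 ≤ i → i + 1 < n → u (i + 1) < u i := by
  intro i hai
  induction i, hai using Nat.le_induction with
  | base => exact fun h => hu a h ha
  | succ i _ ih => exact fun h => hu i h (ih (by omega)).le

lemma lt_succ_of_le_last (hu : NoInteriorWeakMin u n) (hlast : u (n - 2) ≤ u (n - 1)) :
    ∀ i, i + 2 < n → u i < u (i + 1) := by
  intro i hi
  by_contra! h
  have hlt := hu.succ_lt_of_le h (n - 2) (by omega) (by omega)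
  rw [show n - 2 + 1 = n - 1 by omega] at hlt
  exact hlt.not_ge hlast

end NoInteriorWeakMin

lemma noInteriorWeakMin_of_succ_lt {u : ℕ → ℝ} {n : ℕ}
    (h : ∀ i, 1 ≤ i → i + 1 < n → u (i + 1) < u i) : NoInteriorWeakMin u n :=
  fun a ha _ => h (a + 1) (by omega) ha

lemma noInteriorWeakMin_of_lt_succ {u : ℕ → ℝ} {n : ℕ} (h : ∀ i, i + 2 < n → u i < u (i + 1)) :
    NoInteriorWeakMin u n :=
  fun a ha hle => absurd hle (h a ha).not_ge

lemma arcBounded_noInteriorWeakMin_iff {g : ℕ → ℝ} {n : ℕ} (hn : 2 ≤ n)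
    (hne : ∀ i < n, g i ≠ 0) :
    ArcBounded g n ∧ NoInteriorWeakMin (fun i => |g i|) n ↔
      (FirstArcBounded g n ∧ |g 1| ≤ |g 0| ∧
          (∀ i, 1 ≤ i → i + 1 < n → |g (i + 1)| < |g i|) ∧ 0 < |g (n - 1)|) ∨
        (LastArcBounded g n ∧ |g (n - 2)| ≤ |g (n - 1)| ∧
          (∀ i, i + 2 < n → |g i| < |g (i + 1)|) ∧ 0 < |g 0|) := by
  constructor
  · rintro ⟨hg | hg, hu⟩
    · have hfirst := hg.abs_one_le hn
      exact Or.inl ⟨hg, hfirst, hu.succ_lt_of_le hfirst, abs_pos.2 (hne _ (by omega))⟩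
    · have hlast := hg.abs_le_abs_last hn
      exact Or.inr ⟨hg, hlast, hu.lt_succ_of_le_last hlast, abs_pos.2 (hne 0 (by omega))⟩
  · rintro (⟨hg, -, hdec, -⟩ | ⟨hg, -, hinc, -⟩)
    · exact ⟨Or.inl hg, noInteriorWeakMin_of_succ_lt hdec⟩
    · exact ⟨Or.inr hg, noInteriorWeakMin_of_lt_succ hinc⟩

theorem funnel_iff_alternating {B : ℝ} {g : ℕ → ℝ} {n : ℕ} (hB : ∀ i < n, |g i| ≤ B) :
    Funnel B g n ↔ ArcBounded g n ∧ Alternating g n ∧ NoInteriorWeakMin (fun i => |g i|) n := by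
  constructor
  · rintro ⟨hg, hmono⟩
    have monotone_iff {a m : ℕ} (ham : a + m ≤ n) :
        MonotonePath B (SubPath g a) m ↔ EndpointBounded (SubPath g a) m := by
      rw [monotonePath_iff]
      exact and_iff_right (hg.traversable_subPath hB ham)
    have halt : Alternating g n := fun i hi => by
      have h2 := hmono i 2 (Or.inl rfl) hi
      rw [monotone_iff hi, endpointBounded_two_iff] at h2
      exact not_le.1 h2
    refine ⟨hg, halt, fun a ha hle => ?_⟩
    by_contra! hge
    refine hmono a 3 (Or.inr rfl) ha ((monotone_iff ha).2 ?_)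
    exact (endpointBounded_three_iff _ (halt a (by omega)) (halt (a + 1) ha)).2 ⟨hle, hge⟩
  · rintro ⟨hg, halt, hu⟩
    refine ⟨hg, ?_⟩
    rintro a m (rfl | rfl) ham hmono <;> have hb := ((monotonePath_iff _ _ _).1 hmono).2
    · exact (halt a ham).not_ge ((endpointBounded_two_iff _).1 hb)
    · obtain ⟨h1, h2⟩ := (endpointBounded_three_iff _ (halt a (by omega)) (halt (a + 1) ham)).1 hb
      exact (hu a ham h1).not_ge h2

theorem funnel_iff_general (B : ℝ) (g : ℕ → ℝ) (n : ℕ) (hn : 2 ≤ n)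
    (hrange : ∀ i < n, |g i| ≤ B) :
    Funnel B g n ↔
      ((∀ i < n, g i ≠ 0 ∧ Real.sign (g i) = (-1 : ℝ) ^ i * Real.sign (g 0)) ∧
        ((FirstArcBounded g n ∧ |g 1| ≤ |g 0| ∧
            (∀ i, 1 ≤ i → i + 1 < n → |g (i + 1)| < |g i|) ∧ 0 < |g (n - 1)|) ∨
         (LastArcBounded g n ∧ |g (n - 2)| ≤ |g (n - 1)| ∧
            (∀ i, i + 2 < n → |g i| < |g (i + 1)|) ∧ 0 < |g 0|))) := by
  rw [funnel_iff_alternating hrange, alternating_iff_sign hn]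
  constructor
  · rintro ⟨hg, hsign, hu⟩
    exact ⟨hsign, (arcBounded_noInteriorWeakMin_iff hn fun i hi => (hsign i hi).1).1 ⟨hg, hu⟩⟩
  · rintro ⟨hsign, hchain⟩
    obtain ⟨hg, hu⟩ := (arcBounded_noInteriorWeakMin_iff hn fun i hi => (hsign i hi).1).2 hchain
    exact ⟨hg, hsign, hu⟩

/-- Characterization of funnels (arc-indexed path `e_0 … e_{n-1}`, all gains
in `[-B,B]`): a funnel iff arc gains are nonzero with alternating signs, and either the
path is first-arc-bounded with `|g 0| ≥ |g 1| > |g 2| > … > |g (n-1)| > 0`, or it is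
last-arc-bounded with `|g (n-1)| ≥ |g (n-2)| > … > |g 0| > 0`. -/
theorem funnel_iff (B : ℝ) (hB : 0 < B) (g : ℕ → ℝ) (n : ℕ) (hn : 2 ≤ n)
    (hrange : ∀ i < n, |g i| ≤ B) :
    Funnel B g n ↔
      ((∀ i < n, g i ≠ 0 ∧ Real.sign (g i) = (-1 : ℝ) ^ i * Real.sign (g 0)) ∧
        ((FirstArcBounded g n ∧ |g 1| ≤ |g 0| ∧
            (∀ i, 1 ≤ i → i + 1 < n → |g (i + 1)| < |g i|) ∧ 0 < |g (n - 1)|) ∨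
         (LastArcBounded g n ∧ |g (n - 2)| ≤ |g (n - 1)| ∧
            (∀ i, i + 2 < n → |g i| < |g (i + 1)|) ∧ 0 < |g 0|))) :=
  funnel_iff_general B g n hn hrange

end

end EV
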